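/- arXiv:2111.00980 — 5 statements merged into one kernel-verified Lean document; each statement's English description precedes it below -/
import Mathlib

section
/- If P_u = α·P_p + (1−α)·P_n and q_p(c) > 0 for all c ∈ [0,1], then the infimum over c ∈ [0,1] of q_u(c)/q_p(c) equals α + (1−α)·inf_{c ∈ [0,1]} q_n(c)/q_p(c); in particular α ≤ inf_{c ∈ [0,1]} q_u(c)/q_p(c), with equality whenever inf_{c ∈ [0,1]} q_n(c)/q_p(c) = 0. -/
open MeasureTheory Real

/-- Population tail function `q_P(z) = P({x : f(x) ≥ z})`. -/
noncomputable def qtail {X : Type*} [MeasurableSpace X] (P : Measure X) (f : X → ℝ) (z : ℝ) : ℝ :=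
  (P {x | z ≤ f x}).toReal

/-! Tail functions are linear in the measure, so `q_u = α q_p + (1 - α) q_n` and, after dividing by
`q_p > 0`, the ratio `q_u / q_p` is the increasing affine map `y ↦ α + (1 - α) y` applied to
`q_n / q_p`. Such a map commutes with infima of bounded-below sets, and `q_n / q_p ≥ 0`. -/

lemma qtail_mixture {X : Type*} [MeasurableSpace X] (μ ν : Measure X) [IsFiniteMeasure μ]
    [IsFiniteMeasure ν] (f : X → ℝ) {a b : ℝ} (ha : 0 ≤ a) (hb : 0 ≤ b) (z : ℝ) :
    qtail (ENNReal.ofReal a • μ + ENNReal.ofReal b • ν) f z = a * qtail μ f z + b * qtail ν f z := by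
  simp only [qtail, ← measureReal_def]
  rw [measureReal_add_apply (by simp [ENNReal.mul_eq_top]) (by simp [ENNReal.mul_eq_top]),
    measureReal_ennreal_smul_apply, measureReal_ennreal_smul_apply, ENNReal.toReal_ofReal ha,
    ENNReal.toReal_ofReal hb]

lemma Real.sInf_image_affine {S : Set ℝ} (hne : S.Nonempty) (hbdd : BddBelow S) (a : ℝ)
    {b : ℝ} (hb : 0 ≤ b) : sInf ((fun y => a + b * y) '' S) = a + b * sInf S :=
  ((Monotone.const_add (monotone_mul_left_of_nonneg hb) a).map_csInf_of_continuousAt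
    (by fun_prop) hne hbdd).symm

theorem inf_tail_ratio_decomposition_general {X : Type*} [MeasurableSpace X]
    (f : X → ℝ)
    (Pp Pn Pu : Measure X)
    [IsProbabilityMeasure Pp] [IsProbabilityMeasure Pn]
    (α : ℝ) (hα : α ∈ Set.Icc (0:ℝ) 1)
    (hmix : Pu = ENNReal.ofReal α • Pp + ENNReal.ofReal (1 - α) • Pn)
    (hqp : ∀ c ∈ Set.Icc (0:ℝ) 1, 0 < qtail Pp f c) :
    sInf ((fun c => qtail Pu f c / qtail Pp f c) '' Set.Icc (0:ℝ) 1) =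
        α + (1 - α) * sInf ((fun c => qtail Pn f c / qtail Pp f c) '' Set.Icc (0:ℝ) 1) ∧
      α ≤ sInf ((fun c => qtail Pu f c / qtail Pp f c) '' Set.Icc (0:ℝ) 1) ∧
      (sInf ((fun c => qtail Pn f c / qtail Pp f c) '' Set.Icc (0:ℝ) 1) = 0 →
        α = sInf ((fun c => qtail Pu f c / qtail Pp f c) '' Set.Icc (0:ℝ) 1)) := by
  obtain ⟨hα0, hα1⟩ := hα
  set ratio_n := fun c => qtail Pn f c / qtail Pp f c
  have hratio : Set.EqOn (fun c => qtail Pu f c / qtail Pp f c)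
      ((fun y => α + (1 - α) * y) ∘ ratio_n) (Set.Icc 0 1) := fun c hc => by
    have hp := (hqp c hc).ne'
    simp only [Function.comp_apply, ratio_n, hmix, qtail_mixture Pp Pn f hα0 (sub_nonneg.2 hα1)]
    field_simp
  have hratio_n_nonneg : ∀ y ∈ ratio_n '' Set.Icc 0 1, 0 ≤ y := by
    rintro _ ⟨c, hc, rfl⟩
    exact div_nonneg ENNReal.toReal_nonneg (hqp c hc).le
  have hinf : sInf ((fun c => qtail Pu f c / qtail Pp f c) '' Set.Icc 0 1) =
      α + (1 - α) * sInf (ratio_n '' Set.Icc 0 1) := by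
    rw [hratio.image_eq, Set.image_comp]
    exact Real.sInf_image_affine (Set.nonempty_Icc.2 zero_le_one |>.image _)
      ⟨0, hratio_n_nonneg⟩ α (sub_nonneg.2 hα1)
  refine ⟨hinf, ?_, fun h0 => by rw [hinf, h0, mul_zero, add_zero]⟩
  rw [hinf]
  exact le_add_of_nonneg_right (mul_nonneg (sub_nonneg.2 hα1) (Real.sInf_nonneg hratio_n_nonneg))

/-- If `P_u = α·P_p + (1−α)·P_n` and `q_p > 0` on `[0,1]`, then
`inf_{c∈[0,1]} q_u(c)/q_p(c) = α + (1−α)·inf_{c∈[0,1]} q_n(c)/q_p(c)`;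
in particular `α` lower-bounds the infimum, with equality when the negative infimum is `0`. -/
theorem inf_tail_ratio_decomposition {X : Type*} [MeasurableSpace X]
    (f : X → ℝ) (hf : Measurable f) (hf01 : ∀ x, f x ∈ Set.Icc (0:ℝ) 1)
    (Pp Pn Pu : Measure X)
    [IsProbabilityMeasure Pp] [IsProbabilityMeasure Pn] [IsProbabilityMeasure Pu]
    (α : ℝ) (hα : α ∈ Set.Icc (0:ℝ) 1)
    (hmix : Pu = ENNReal.ofReal α • Pp + ENNReal.ofReal (1 - α) • Pn)
    (hqp : ∀ c ∈ Set.Icc (0:ℝ) 1, 0 < qtail Pp f c) :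
    sInf ((fun c => qtail Pu f c / qtail Pp f c) '' Set.Icc (0:ℝ) 1) =
        α + (1 - α) * sInf ((fun c => qtail Pn f c / qtail Pp f c) '' Set.Icc (0:ℝ) 1) ∧
      α ≤ sInf ((fun c => qtail Pu f c / qtail Pp f c) '' Set.Icc (0:ℝ) 1) ∧
      (sInf ((fun c => qtail Pn f c / qtail Pp f c) '' Set.Icc (0:ℝ) 1) = 0 →
        α = sInf ((fun c => qtail Pu f c / qtail Pp f c) '' Set.Icc (0:ℝ) 1)) :=
  inf_tail_ratio_decomposition_general f Pp Pn Pu α hα hmix hqp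
end

section
/- Suppose α ∈ (0,1) and there exists f* ∈ F with P_p({x : f*(x) = 1}) = 1 and P_n({x : f*(x) = 0}) = 1 (a perfect separator of the positive and negative distributions). Then any minimizer (f, w) of the CVIR objective J over f ∈ F and feasible weight functions w achieves zero classification error on the unlabeled distribution: α·P_p({x : f(x) ≠ 1}) + (1−α)·P_n({x : f(x) ≠ 0}) = 0. -/
open MeasureTheory

/-- A weight function `w : X → [0,1]` is feasible if it is measurable and `∫ w dP_u = 1−α`. -/
def Feasible {X : Type*} [MeasurableSpace X] (Pu : Measure X) (α : ℝ) (w : X → ℝ) : Prop :=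
  Measurable w ∧ (∀ x, w x ∈ Set.Icc (0:ℝ) 1) ∧ ∫ x, w x ∂Pu = 1 - α

/-- The CVIR objective with 0-1 loss:
`J(f, w) = ∫ 1{f ≠ 1} dP_p + (1/(1−α))·∫ w·1{f ≠ 0} dP_u`. -/
noncomputable def cvirJ {X : Type*} [MeasurableSpace X] (Pp Pu : Measure X) (α : ℝ)
    (f w : X → ℝ) : ℝ :=
  (Pp {x | f x ≠ 1}).toReal + (1 / (1 - α)) * ∫ x in {x | f x ≠ 0}, w x ∂Pu

/-- If `F` contains a perfect separator of `P_p` and `P_n`, then any minimizer `(f, w)` of the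
CVIR objective over `f ∈ F` and feasible weights `w` achieves zero classification error on the
unlabeled distribution `P_u = α·P_p + (1−α)·P_n`. -/
theorem cvir_minimizer_perfect_classifier {X : Type*} [MeasurableSpace X]
    (Pp Pn : Measure X) [IsProbabilityMeasure Pp] [IsProbabilityMeasure Pn]
    (α : ℝ) (hα : α ∈ Set.Ioo (0:ℝ) 1)
    (Pu : Measure X) (hPu : Pu = ENNReal.ofReal α • Pp + ENNReal.ofReal (1 - α) • Pn)
    (F : Set (X → ℝ)) (hF : ∀ f ∈ F, Measurable f ∧ ∀ x, f x = 0 ∨ f x = 1)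
    (fstar : X → ℝ) (hfstarF : fstar ∈ F)
    (hsep : Pp {x | fstar x = 1} = 1 ∧ Pn {x | fstar x = 0} = 1)
    (f w : X → ℝ) (hfF : f ∈ F) (hw : Feasible Pu α w)
    (hmin : ∀ f' ∈ F, ∀ w', Feasible Pu α w' →
      cvirJ Pp Pu α f w ≤ cvirJ Pp Pu α f' w') :
    α * (Pp {x | f x ≠ 1}).toReal + (1 - α) * (Pn {x | f x ≠ 0}).toReal = 0 := by
  obtain ⟨hα0, hα1⟩ := hα
  have h1α : (0:ℝ) < 1 - α := by linarith
  obtain ⟨hfm, hfv⟩ := hF f hfF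
  obtain ⟨hsm, hsv⟩ := hF fstar hfstarF
  obtain ⟨hwm, hwb, hwint⟩ := hw
  have mf1 : MeasurableSet {x | f x = 1} := hfm (measurableSet_singleton 1)
  have mf0 : MeasurableSet {x | f x = 0} := hfm (measurableSet_singleton 0)
  have ms1 : MeasurableSet {x | fstar x = 1} := hsm (measurableSet_singleton 1)
  have ms0 : MeasurableSet {x | fstar x = 0} := hsm (measurableSet_singleton 0)
  have hne1 : {x | f x ≠ 1} = {x | f x = 1}ᶜ := rfl
  have hne0 : {x | f x ≠ 0} = {x | f x = 0}ᶜ := rfl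
  have hsne1 : {x | fstar x ≠ 1} = {x | fstar x = 1}ᶜ := rfl
  -- Pp {fstar = 0} = 0
  have hPps0 : Pp {x | fstar x = 0} = 0 := by
    refine measure_mono_null (fun x hx => ?_) ((prob_compl_eq_zero_iff ms1).mpr hsep.1)
    simp only [Set.mem_compl_iff, Set.mem_setOf_eq] at *
    intro h; rw [h] at hx; norm_num at hx
  -- Pu {fstar = 0} = ofReal (1-α)
  have hPus0 : Pu {x | fstar x = 0} = ENNReal.ofReal (1 - α) := by
    rw [hPu]
    simp [Measure.add_apply, Measure.smul_apply, smul_eq_mul, hPps0, hsep.2]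
  -- the witness weight
  set w' : X → ℝ := Set.indicator {x | fstar x = 0} (fun _ => (1:ℝ)) with hw'def
  have hw'feas : Feasible Pu α w' := by
    refine ⟨measurable_const.indicator ms0, fun x => ?_, ?_⟩
    · by_cases h : x ∈ {x | fstar x = 0} <;>
        simp [hw'def, Set.indicator_apply, h]
    · have : ∫ x, w' x ∂Pu = (Pu {x | fstar x = 0}).toReal := by
        rw [hw'def]
        exact integral_indicator_one ms0
      rw [this, hPus0, ENNReal.toReal_ofReal h1α.le]
  -- J(fstar, w') = 0
  have hJstar : cvirJ Pp Pu α fstar w' = 0 := by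
    unfold cvirJ
    have h1 : Pp {x | fstar x ≠ 1} = 0 := by
      rw [hsne1]; exact (prob_compl_eq_zero_iff ms1).mpr hsep.1
    have h2 : ∫ x in {x | fstar x ≠ 0}, w' x ∂Pu = 0 := by
      apply setIntegral_eq_zero_of_forall_eq_zero
      intro x hx
      have hx' : x ∉ {x | fstar x = 0} := hx
      simp [hw'def, Set.indicator_of_notMem hx']
    rw [h1, h2]
    simp
  -- J(f, w) components are nonneg
  have hterm1 : (0:ℝ) ≤ (Pp {x | f x ≠ 1}).toReal := ENNReal.toReal_nonneg
  have hInt : (0:ℝ) ≤ ∫ x in {x | f x ≠ 0}, w x ∂Pu := by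
    apply setIntegral_nonneg
    · rw [hne0]; exact mf0.compl
    · exact fun x _ => (hwb x).1
  have hJle : cvirJ Pp Pu α f w ≤ 0 := by
    rw [← hJstar]; exact hmin fstar hfstarF w' hw'feas
  have hc : (0:ℝ) < 1 / (1 - α) := by positivity
  have hterm2 : (1 / (1 - α)) * ∫ x in {x | f x ≠ 0}, w x ∂Pu ≥ 0 :=
    mul_nonneg hc.le hInt
  unfold cvirJ at hJle
  have hT1 : (Pp {x | f x ≠ 1}).toReal = 0 := by linarith
  have hT2 : ∫ x in {x | f x ≠ 0}, w x ∂Pu = 0 := by nlinarith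
  -- Pp {f ≠ 1} = 0
  have hPpf : Pp {x | f x ≠ 1} = 0 := by
    rcases (ENNReal.toReal_eq_zero_iff _).mp hT1 with h | h
    · exact h
    · exact absurd h (measure_ne_top _ _)
  -- integrability of w
  have hPuProb : IsProbabilityMeasure Pu := by
    constructor
    rw [hPu]
    simp only [Measure.add_apply, Measure.smul_apply, smul_eq_mul, measure_univ, mul_one]
    rw [← ENNReal.ofReal_add hα0.le h1α.le]
    norm_num
  have hwi : Integrable w Pu := by
    refine (integrable_const (1:ℝ)).mono' hwm.aestronglyMeasurable ?_
    filter_upwards with x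
    rw [Real.norm_eq_abs, abs_of_nonneg (hwb x).1]
    exact (hwb x).2
  -- ∫_{f=0} w = 1 - α
  have hsplit : (∫ x in {x | f x = 0}, w x ∂Pu) + ∫ x in {x | f x = 0}ᶜ, w x ∂Pu
      = ∫ x, w x ∂Pu := integral_add_compl mf0 hwi
  rw [← hne0, hT2, add_zero, hwint] at hsplit
  -- ∫_{f=0} w ≤ Pu{f=0}.toReal
  have hle : (1 - α : ℝ) ≤ (Pu {x | f x = 0}).toReal := by
    have h := setIntegral_mono_on hwi.integrableOn
      (integrable_const (1:ℝ)).integrableOn mf0 (fun x _ => (hwb x).2)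
    rw [setIntegral_const, smul_eq_mul, mul_one, hsplit] at h
    exact h
  -- Pp {f = 0} = 0
  have hPpf0 : Pp {x | f x = 0} = 0 := by
    refine measure_mono_null (fun x hx => ?_) hPpf
    simp only [Set.mem_setOf_eq] at *
    intro h; rw [h] at hx; norm_num at hx
  have hPuf0 : (Pu {x | f x = 0}).toReal = (1 - α) * (Pn {x | f x = 0}).toReal := by
    rw [hPu]
    simp only [Measure.add_apply, Measure.smul_apply, smul_eq_mul, hPpf0, mul_zero, zero_add]
    rw [ENNReal.toReal_mul, ENNReal.toReal_ofReal h1α.le]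
  rw [hPuf0] at hle
  have ht1 : (1:ℝ) ≤ (Pn {x | f x = 0}).toReal := by nlinarith
  have ht2 : (Pn {x | f x = 0}).toReal ≤ 1 := by
    have := prob_le_one (μ := Pn) (s := {x | f x = 0})
    simpa using ENNReal.toReal_mono (by norm_num) this
  have hPn1 : Pn {x | f x = 0} = 1 := by
    have : (Pn {x | f x = 0}).toReal = 1 := le_antisymm ht2 ht1
    rwa [ENNReal.toReal_eq_one_iff] at this
  have hPnf : Pn {x | f x ≠ 0} = 0 := by
    rw [hne0]
    exact (prob_compl_eq_zero_iff mf0).mpr hPn1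
  rw [hT1, hPnf]
  simp
end

section
/- Suppose α ∈ (0,1) and f* : X → {0,1} is measurable with P_p({x : f*(x) = 1}) = 1 and P_n({x : f*(x) = 0}) = 1. Then the weight function w = 1 − f* is feasible (i.e., ∫ (1−f*) dP_u = 1−α), for every measurable f : X → {0,1} one has (1/(1−α))·∫ (1−f*(x))·1{f(x) ≠ 0} dP_u(x) = ∫ 1{f(x) ≠ 0} dP_n(x), so that J(f, 1−f*) equals the positive-versus-negative risk of f, and in particular J(f*, 1−f*) = 0. -/
open MeasureTheory

/-! Because `f*` is `{0,1}`-valued, the weight `1 - f*` is the indicator of `{f* = 0}`, a set that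
is `P_p`-null and `P_n`-conull. Integrating it against `P_u = α P_p + (1 - α) P_n` over any set `t`
therefore removes the positive component exactly and leaves `(1 - α) P_n(t)`; taking `t = X` gives
feasibility, and `t = {f ≠ 0}` gives the risk identities. -/

open scoped ENNReal

lemma one_sub_eq_indicator_of_zero_or_one {X : Type*} {f : X → ℝ} (hf : ∀ x, f x = 0 ∨ f x = 1) :
    (fun x => 1 - f x) = {x | f x = 0}.indicator 1 := by
  funext x
  rcases hf x with h | h <;> simp [Set.indicator, h]

section

variable {X : Type*} [MeasurableSpace X]

lemma Measure.add_smul_apply_inter_of_null {μ ν : Measure X} {s : Set X} (hμ : μ s = 0)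
    (hν : ν sᶜ = 0) (a b : ℝ≥0∞) (t : Set X) : (a • μ + b • ν) (s ∩ t) = b * ν t := by
  rw [Measure.add_apply, Measure.smul_apply, Measure.smul_apply, smul_eq_mul, smul_eq_mul,
    measure_mono_null Set.inter_subset_left hμ, Set.inter_comm, measure_inter_conull hν,
    mul_zero, zero_add]

theorem setIntegral_one_sub_mixture_of_separates {μ ν : Measure X} {α : ℝ} (hα : α < 1)
    {f : X → ℝ} (hf : Measurable f) (hf01 : ∀ x, f x = 0 ∨ f x = 1)
    (hμ : ∀ᵐ x ∂μ, f x = 1) (hν : ∀ᵐ x ∂ν, f x = 0) (t : Set X) :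
    (1 / (1 - α)) * ∫ x in t, (1 - f x) ∂(ENNReal.ofReal α • μ + ENNReal.ofReal (1 - α) • ν) =
      (ν t).toReal := by
  have hs : MeasurableSet {x | f x = 0} := hf (measurableSet_singleton 0)
  have hμs : μ {x | f x = 0} = 0 :=
    measure_mono_null (fun x (h0 : f x = 0) => show ¬f x = 1 by simp [h0]) (ae_iff.mp hμ)
  rw [one_sub_eq_indicator_of_zero_or_one hf01, integral_indicator_one hs,
    measureReal_restrict_apply hs, measureReal_def,
    Measure.add_smul_apply_inter_of_null hμs (ae_iff.mp hν), ENNReal.toReal_mul,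
    ENNReal.toReal_ofReal (by linarith)]
  field_simp [show (1 - α) ≠ 0 by linarith]

end

/-- If `f*` perfectly separates `P_p` and `P_n`, then `w = 1 − f*` is a feasible weight, the
reweighted unlabeled risk of any `{0,1}`-valued classifier `f` equals its risk on `P_n`, so
`J(f, 1−f*)` is the positive-versus-negative risk of `f`, and `J(f*, 1−f*) = 0`. -/
theorem cvir_perfect_separator_weight {X : Type*} [MeasurableSpace X]
    (Pp Pn : Measure X) [IsProbabilityMeasure Pp] [IsProbabilityMeasure Pn]
    (α : ℝ) (hα : α ∈ Set.Ioo (0:ℝ) 1)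
    (Pu : Measure X) (hPu : Pu = ENNReal.ofReal α • Pp + ENNReal.ofReal (1 - α) • Pn)
    (fstar : X → ℝ) (hfstar_m : Measurable fstar) (hfstar01 : ∀ x, fstar x = 0 ∨ fstar x = 1)
    (hsep : Pp {x | fstar x = 1} = 1 ∧ Pn {x | fstar x = 0} = 1) :
    Feasible Pu α (fun x => 1 - fstar x) ∧
      (∀ f : X → ℝ, Measurable f → (∀ x, f x = 0 ∨ f x = 1) →
        (1 / (1 - α)) * ∫ x in {x | f x ≠ 0}, (1 - fstar x) ∂Pu =
            (Pn {x | f x ≠ 0}).toReal ∧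
          cvirJ Pp Pu α f (fun x => 1 - fstar x) =
            (Pp {x | f x ≠ 1}).toReal + (Pn {x | f x ≠ 0}).toReal) ∧
      cvirJ Pp Pu α fstar (fun x => 1 - fstar x) = 0 := by
  have hPp : ∀ᵐ x ∂Pp, fstar x = 1 :=
    (ae_iff_prob_eq_one (measurableSet_setOfPred.mp (hfstar_m (measurableSet_singleton 1)))).mpr
      hsep.1
  have hPn : ∀ᵐ x ∂Pn, fstar x = 0 :=
    (ae_iff_prob_eq_one (measurableSet_setOfPred.mp (hfstar_m (measurableSet_singleton 0)))).mpr
      hsep.2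
  have hrisk (t : Set X) : (1 / (1 - α)) * ∫ x in t, (1 - fstar x) ∂Pu = (Pn t).toReal := by
    rw [hPu]
    exact setIntegral_one_sub_mixture_of_separates hα.2 hfstar_m hfstar01 hPp hPn t
  refine ⟨⟨by fun_prop, fun x => ?_, ?_⟩, fun f _ _ => ⟨hrisk _, by rw [cvirJ, hrisk]⟩, ?_⟩
  · rcases hfstar01 x with h | h <;> simp [h]
  · have h1α : 1 - α ≠ 0 := by linarith [hα.2]
    have htotal := hrisk Set.univ
    rw [Measure.restrict_univ, measure_univ, ENNReal.toReal_one] at htotal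
    field_simp at htotal
    linarith
  · rw [cvirJ, hrisk, ae_iff.mp hPp, ae_iff.mp hPn, ENNReal.toReal_zero, add_zero]
end

section
/- Suppose α ∈ (0,1) and f : X → {0,1} is measurable with positive positive-versus-negative error, i.e., ∫ 1{f(x) ≠ 1} dP_p(x) + ∫ 1{f(x) ≠ 0} dP_n(x) > 0. Then for every feasible weight function w one has J(f, w) > 0. -/
open MeasureTheory

/-!
If `P_p{f ≠ 1} > 0` the first term of `J` is already positive. Otherwise `P_p` does not charge
`{f = 0}`, so `P_u{f = 0} = (1-α) P_n{f = 0} < 1 - α` because the error forces `P_n{f ≠ 0} > 0`.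
Since `w ≤ 1`, the weight `w` puts mass at most `P_u{f = 0}` on `{f = 0}`; its total mass is
`1 - α`, so the remainder `∫_{f ≠ 0} w dP_u` is positive.
-/

namespace MeasureTheory

variable {X : Type*} [MeasurableSpace X]

lemma isFiniteMeasure_ofReal_smul_add (μ ν : Measure X) [IsFiniteMeasure μ] [IsFiniteMeasure ν]
    (a b : ℝ) : IsFiniteMeasure (ENNReal.ofReal a • μ + ENNReal.ofReal b • ν) :=
  have := μ.smul_finite ENNReal.ofReal_ne_top (c := ENNReal.ofReal a)
  have := ν.smul_finite ENNReal.ofReal_ne_top (c := ENNReal.ofReal b)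
  inferInstance

lemma measureReal_ofReal_smul_add (μ ν : Measure X) [IsFiniteMeasure μ] [IsFiniteMeasure ν]
    {a b : ℝ} (ha : 0 ≤ a) (hb : 0 ≤ b) (s : Set X) :
    (ENNReal.ofReal a • μ + ENNReal.ofReal b • ν).real s = a * μ.real s + b * ν.real s := by
  have := μ.smul_finite ENNReal.ofReal_ne_top (c := ENNReal.ofReal a)
  have := ν.smul_finite ENNReal.ofReal_ne_top (c := ENNReal.ofReal b)
  rw [measureReal_add_apply, measureReal_ennreal_smul_apply, measureReal_ennreal_smul_apply,
    ENNReal.toReal_ofReal ha, ENNReal.toReal_ofReal hb]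

lemma integral_sub_measureReal_compl_le_setIntegral {μ : Measure X} [IsFiniteMeasure μ]
    {w : X → ℝ} {s : Set X} (hw : Integrable w μ) (hw_le_one : ∀ x, w x ≤ 1)
    (hs : MeasurableSet s) : ∫ x, w x ∂μ - μ.real sᶜ ≤ ∫ x in s, w x ∂μ := by
  have h_compl : ∫ x in sᶜ, w x ∂μ ≤ μ.real sᶜ :=
    calc ∫ x in sᶜ, w x ∂μ ≤ ∫ _ in sᶜ, (1 : ℝ) ∂μ :=
          setIntegral_mono_on hw.integrableOn (integrableOn_const (by finiteness)) hs.compl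
            fun x _ ↦ hw_le_one x
      _ = μ.real sᶜ := by rw [setIntegral_const, smul_eq_mul, mul_one]
  linarith [integral_add_compl hs hw]

end MeasureTheory

lemma Feasible.integrable {X : Type*} [MeasurableSpace X] {Pu : Measure X} [IsFiniteMeasure Pu]
    {α : ℝ} {w : X → ℝ} (hw : Feasible Pu α w) : Integrable w Pu :=
  .of_bound hw.1.aestronglyMeasurable 1 <| .of_forall fun x ↦ by
    rw [Real.norm_of_nonneg (hw.2.1 x).1]
    exact (hw.2.1 x).2

theorem cvir_positive_error_positive_objective_general {X : Type*} [MeasurableSpace X]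
    (Pp Pn : Measure X) [IsProbabilityMeasure Pp] [IsProbabilityMeasure Pn]
    (α : ℝ) (hα : α ∈ Set.Ioo (0:ℝ) 1)
    (Pu : Measure X) (hPu : Pu = ENNReal.ofReal α • Pp + ENNReal.ofReal (1 - α) • Pn)
    (f : X → ℝ) (hf_m : Measurable f)
    (herr : 0 < (Pp {x | f x ≠ 1}).toReal + (Pn {x | f x ≠ 0}).toReal) :
    ∀ w : X → ℝ, Feasible Pu α w → 0 < cvirJ Pp Pu α f w := by
  intro w hw
  obtain ⟨hα_pos, hα_lt_one⟩ := hα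
  have h_one_sub_α : 0 < 1 - α := sub_pos.2 hα_lt_one
  have : IsFiniteMeasure Pu := hPu ▸ isFiniteMeasure_ofReal_smul_add Pp Pn α (1 - α)
  set s := {x | f x ≠ 0}
  have hs : MeasurableSet s := (hf_m (measurableSet_singleton 0)).compl
  have h_weighted_nonneg : 0 ≤ 1 / (1 - α) * ∫ x in s, w x ∂Pu :=
    mul_nonneg (one_div_pos.2 h_one_sub_α).le
      (setIntegral_nonneg hs fun x _ ↦ (hw.2.1 x).1)
  rcases (ENNReal.toReal_nonneg (a := Pp {x | f x ≠ 1})).lt_or_eq with hPp_err | hPp_err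
  · exact add_pos_of_pos_of_nonneg hPp_err h_weighted_nonneg
  have hPp_compl : Pp.real sᶜ = 0 :=
    measureReal_mono_null (fun x (hx : ¬f x ≠ 0) (h1 : f x = 1) ↦ hx (h1 ▸ one_ne_zero))
      hPp_err.symm
  have hPn : 0 < Pn.real s := by rwa [← hPp_err, zero_add] at herr
  have hPu_compl : Pu.real sᶜ < 1 - α := by
    rw [hPu, measureReal_ofReal_smul_add Pp Pn hα_pos.le h_one_sub_α.le, hPp_compl,
      measureReal_compl hs, probReal_univ]
    nlinarith
  have h_mass := integral_sub_measureReal_compl_le_setIntegral hw.integrable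
    (fun x ↦ (hw.2.1 x).2) hs
  rw [hw.2.2] at h_mass
  unfold cvirJ
  rw [← hPp_err, zero_add]
  exact mul_pos (one_div_pos.2 h_one_sub_α) (by linarith)

/-- If `f` has positive positive-versus-negative error, then for every feasible weight `w` the
CVIR objective `J(f, w)` is strictly positive. -/
theorem cvir_positive_error_positive_objective {X : Type*} [MeasurableSpace X]
    (Pp Pn : Measure X) [IsProbabilityMeasure Pp] [IsProbabilityMeasure Pn]
    (α : ℝ) (hα : α ∈ Set.Ioo (0:ℝ) 1)
    (Pu : Measure X) (hPu : Pu = ENNReal.ofReal α • Pp + ENNReal.ofReal (1 - α) • Pn)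
    (f : X → ℝ) (hf_m : Measurable f) (hf01 : ∀ x, f x = 0 ∨ f x = 1)
    (herr : 0 < (Pp {x | f x ≠ 1}).toReal + (Pn {x | f x ≠ 0}).toReal) :
    ∀ w : X → ℝ, Feasible Pu α w → 0 < cvirJ Pp Pu α f w :=
  cvir_positive_error_positive_objective_general Pp Pn α hα Pu hPu f hf_m herr
end

section
/- Suppose α ∈ (0,1) and A is an anchor set, i.e., a measurable set with p_n(x) = 0 and p_p(x) > 0 for all x ∈ A and ∫_A p_p dμ ≥ γ for some γ > 0. Then for every x ∈ A one has τ(x) = 1/α, and for every x′ with p_n(x′) > 0 one has τ(x′) < 1/α; consequently, for any strictly increasing g : ℝ → [0,1], the scoring function f = g ∘ τ satisfies the pure positive bin property at threshold c = g(1/α): P_p({x : f(x) ≥ c}) ≥ γ and P_n({x : f(x) ≥ c}) = 0. Thus any monotonic transformation of the Bayes-optimal positive-versus-unlabeled scoring function induces a pure positive top bin with ε_p ≥ γ. -/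
open MeasureTheory

/-!
On an anchor point the negative density vanishes, so the denominator of `τ` collapses to
`α · p_p` and `τ = 1/α`; wherever `p_n > 0` the term `(1 - α) p_n` strictly enlarges the
denominator, so `τ < 1/α`. Hence the top level set `{τ ≥ 1/α}`, which a strictly increasing `g`
does not change, contains the anchor set (of `P_p`-mass at least `γ`) and avoids the support of
`p_n` (so it is `P_n`-null).
-/

section WithDensity

variable {α : Type*} [MeasurableSpace α] {μ : Measure α}

theorem ofReal_integral_le_lintegral_ofReal {f : α → ℝ} (hf : 0 ≤ᵐ[μ] f) :
    ENNReal.ofReal (∫ x, f x ∂μ) ≤ ∫⁻ x, ENNReal.ofReal (f x) ∂μ := by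
  by_cases hfi : Integrable f μ
  · exact (ofReal_integral_eq_lintegral_ofReal hfi hf).le
  · simp [integral_undef hfi]

theorem withDensity_ofReal_eq_zero_of_nonpos {f : α → ℝ} (hf : AEMeasurable f μ) {s : Set α}
    (hs : ∀ x ∈ s, f x ≤ 0) : μ.withDensity (fun x => ENNReal.ofReal (f x)) s = 0 := by
  have hempty : {x | ENNReal.ofReal (f x) ≠ 0} ∩ s = ∅ := by
    ext x
    simpa [ENNReal.ofReal_eq_zero] using fun hpos hx => (hs x hx).not_gt hpos
  rw [withDensity_apply_eq_zero' hf.ennreal_ofReal, hempty, measure_empty]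

end WithDensity

noncomputable def bayesPUScore (α p q : ℝ) : ℝ :=
  if 0 < p then p / (α * p + (1 - α) * q) else 0

theorem bayesPUScore_of_neg_eq_zero (α : ℝ) {p : ℝ} (hp : 0 < p) :
    bayesPUScore α p 0 = 1 / α := by
  rw [bayesPUScore, if_pos hp, mul_zero, add_zero, div_mul_cancel_right₀ hp.ne', one_div]

theorem bayesPUScore_lt_inv {α p q : ℝ} (hα₀ : 0 < α) (hα₁ : α < 1) (hq : 0 < q) :
    bayesPUScore α p q < 1 / α := by
  unfold bayesPUScore
  split_ifs with hp
  · have hαq : 0 < (1 - α) * q := mul_pos (sub_pos.2 hα₁) hq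
    rw [div_lt_div_iff₀ (by positivity) hα₀]
    linarith
  · positivity

theorem anchor_set_pure_positive_bin_general {X : Type*} [MeasurableSpace X] (μ : Measure X)
    (pp pn : X → ℝ) (hpn_m : Measurable pn)
    (hpp_nonneg : ∀ x, 0 ≤ pp x)
    (Pp Pn : Measure X)
    (hPp : Pp = μ.withDensity (fun x => ENNReal.ofReal (pp x)))
    (hPn : Pn = μ.withDensity (fun x => ENNReal.ofReal (pn x)))
    (α : ℝ) (hα : α ∈ Set.Ioo (0:ℝ) 1)
    (τ : X → ℝ)
    (hτ : τ = fun x => if 0 < pp x then pp x / (α * pp x + (1 - α) * pn x) else 0)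
    (A : Set X)
    (hA_neg : ∀ x ∈ A, pn x = 0) (hA_pos : ∀ x ∈ A, 0 < pp x)
    (γ : ℝ) (hA_mass : γ ≤ ∫ x in A, pp x ∂μ) :
    (∀ x ∈ A, τ x = 1 / α) ∧
      (∀ x', 0 < pn x' → τ x' < 1 / α) ∧
      (∀ g : ℝ → ℝ, StrictMono g → (∀ t, g t ∈ Set.Icc (0:ℝ) 1) →
        ENNReal.ofReal γ ≤ Pp {x | g (1 / α) ≤ g (τ x)} ∧
          Pn {x | g (1 / α) ≤ g (τ x)} = 0) := by
  obtain ⟨hα₀, hα₁⟩ := hα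
  have hτ_eq : ∀ x, τ x = bayesPUScore α (pp x) (pn x) := fun x => by rw [hτ]; rfl
  have hτ_anchor : ∀ x ∈ A, τ x = 1 / α := fun x hx => by
    rw [hτ_eq, hA_neg x hx, bayesPUScore_of_neg_eq_zero α (hA_pos x hx)]
  have hτ_neg : ∀ x, 0 < pn x → τ x < 1 / α := fun x hx => by
    rw [hτ_eq]; exact bayesPUScore_lt_inv hα₀ hα₁ hx
  refine ⟨hτ_anchor, hτ_neg, fun g hg _ => ?_⟩
  simp only [hg.le_iff_le]
  constructor
  · calc ENNReal.ofReal γ ≤ ENNReal.ofReal (∫ x in A, pp x ∂μ) := ENNReal.ofReal_le_ofReal hA_mass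
      _ ≤ ∫⁻ x in A, ENNReal.ofReal (pp x) ∂μ :=
        ofReal_integral_le_lintegral_ofReal (.of_forall hpp_nonneg)
      _ ≤ Pp A := hPp ▸ withDensity_apply_le _ A
      _ ≤ Pp {x | 1 / α ≤ τ x} := measure_mono fun x hx => (hτ_anchor x hx).ge
  · rw [hPn]
    exact withDensity_ofReal_eq_zero_of_nonpos hpn_m.aemeasurable
      fun x hx => not_lt.1 fun hpos => (hτ_neg x hpos).not_ge hx

/-- Anchor sets and the Bayes-optimal positive-versus-unlabeled scoring function: on an anchor
set `A` the score `τ` equals `1/α`, off the negative support boundary it is strictly smaller,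
and hence any strictly increasing transformation `g ∘ τ` has a pure positive top bin at
threshold `c = g(1/α)` with mass at least `γ` under `P_p` and mass `0` under `P_n`. -/
theorem anchor_set_pure_positive_bin {X : Type*} [MeasurableSpace X] (μ : Measure X)
    (pp pn : X → ℝ) (hpp_m : Measurable pp) (hpn_m : Measurable pn)
    (hpp_nonneg : ∀ x, 0 ≤ pp x) (hpn_nonneg : ∀ x, 0 ≤ pn x)
    (Pp Pn : Measure X)
    (hPp : Pp = μ.withDensity (fun x => ENNReal.ofReal (pp x)))
    (hPn : Pn = μ.withDensity (fun x => ENNReal.ofReal (pn x)))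
    [IsProbabilityMeasure Pp] [IsProbabilityMeasure Pn]
    (α : ℝ) (hα : α ∈ Set.Ioo (0:ℝ) 1)
    (τ : X → ℝ)
    (hτ : τ = fun x => if 0 < pp x then pp x / (α * pp x + (1 - α) * pn x) else 0)
    (A : Set X) (hA : MeasurableSet A)
    (hA_neg : ∀ x ∈ A, pn x = 0) (hA_pos : ∀ x ∈ A, 0 < pp x)
    (γ : ℝ) (hγ : 0 < γ) (hA_mass : γ ≤ ∫ x in A, pp x ∂μ) :
    (∀ x ∈ A, τ x = 1 / α) ∧
      (∀ x', 0 < pn x' → τ x' < 1 / α) ∧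
      (∀ g : ℝ → ℝ, StrictMono g → (∀ t, g t ∈ Set.Icc (0:ℝ) 1) →
        ENNReal.ofReal γ ≤ Pp {x | g (1 / α) ≤ g (τ x)} ∧
          Pn {x | g (1 / α) ≤ g (τ x)} = 0) :=
  anchor_set_pure_positive_bin_general μ pp pn hpn_m hpp_nonneg Pp Pn hPp hPn α hα τ hτ A hA_neg
    hA_pos γ hA_mass
end
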